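/- arXiv:2605.06446 — 3 statements merged into one kernel-verified Lean document; each statement's English description precedes it below -/
import Mathlib

section
/- Suppose the row-wise feature map φ satisfies ‖φ(M)‖_F ≤ B_φ and is J_φ-Lipschitz in Frobenius norm: ‖φ(M) - φ(M')‖_F ≤ J_φ ‖M - M'‖_F. Let ‖H‖_F ≤ R and write Φ = (W^Q, W^K), Φ' = (W^{Q'}, W^{K'}). Then the map Z(H;Φ) = φ(HW^Q) φ(HW^K)^⊤ H satisfies ‖Z(H;Φ) - Z(H;Φ')‖_F ≤ √2 · B_φ J_φ R² · ‖Φ - Φ'‖_F, where ‖Φ - Φ'‖_F² = ‖W^Q - W^{Q'}‖_F² + ‖W^K - W^{K'}‖_F². -/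
attribute [local instance] Matrix.frobeniusNormedAddCommGroup

open Matrix in
theorem stmt1 {n d dk : ℕ}
    (φ : Matrix (Fin n) (Fin dk) ℝ → Matrix (Fin n) (Fin dk) ℝ)
    (Bφ Jφ R : ℝ) (hBφ : 0 < Bφ) (hJφ : 0 < Jφ) (hR : 0 < R)
    (hφbound : ∀ M : Matrix (Fin n) (Fin dk) ℝ, ‖φ M‖ ≤ Bφ)
    (hφlip : ∀ M M' : Matrix (Fin n) (Fin dk) ℝ, ‖φ M - φ M'‖ ≤ Jφ * ‖M - M'‖)
    (H : Matrix (Fin n) (Fin d) ℝ) (hH : ‖H‖ ≤ R)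
    (WQ WK WQ' WK' : Matrix (Fin d) (Fin dk) ℝ) :
    ‖φ (H * WQ) * (φ (H * WK))ᵀ * H - φ (H * WQ') * (φ (H * WK'))ᵀ * H‖
      ≤ Real.sqrt 2 * Bφ * Jφ * R ^ 2 *
          Real.sqrt (‖WQ - WQ'‖ ^ 2 + ‖WK - WK'‖ ^ 2) := by
  have hR0 : (0:ℝ) ≤ R := hR.le
  have hB0 : (0:ℝ) ≤ Bφ := hBφ.le
  have hJ0 : (0:ℝ) ≤ Jφ := hJφ.le
  set A := φ (H * WQ)
  set B := φ (H * WK)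
  set A' := φ (H * WQ')
  set B' := φ (H * WK')
  have key : A * Bᵀ * H - A' * B'ᵀ * H
      = (A - A') * Bᵀ * H + A' * (B - B')ᵀ * H := by
    simp only [transpose_sub, Matrix.sub_mul, Matrix.mul_sub]
    abel
  have hA : ‖A - A'‖ ≤ Jφ * (R * ‖WQ - WQ'‖) := by
    refine (hφlip _ _).trans ?_
    gcongr
    rw [← Matrix.mul_sub]
    exact (Matrix.frobenius_norm_mul H (WQ - WQ')).trans (by gcongr)
  have hB : ‖B - B'‖ ≤ Jφ * (R * ‖WK - WK'‖) := by
    refine (hφlip _ _).trans ?_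
    gcongr
    rw [← Matrix.mul_sub]
    exact (Matrix.frobenius_norm_mul H (WK - WK')).trans (by gcongr)
  have h1 : ‖(A - A') * Bᵀ * H‖ ≤ Bφ * Jφ * R ^ 2 * ‖WQ - WQ'‖ := by
    calc ‖(A - A') * Bᵀ * H‖ ≤ ‖(A - A') * Bᵀ‖ * ‖H‖ := Matrix.frobenius_norm_mul _ _
    _ ≤ ‖A - A'‖ * ‖Bᵀ‖ * ‖H‖ := by
        gcongr; exact Matrix.frobenius_norm_mul _ _
    _ ≤ (Jφ * (R * ‖WQ - WQ'‖)) * Bφ * R := by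
        rw [Matrix.frobenius_norm_transpose]
        exact mul_le_mul (mul_le_mul hA (hφbound _) (norm_nonneg _) (by positivity)) hH
          (norm_nonneg _) (by positivity)
    _ = Bφ * Jφ * R ^ 2 * ‖WQ - WQ'‖ := by ring
  have h2 : ‖A' * (B - B')ᵀ * H‖ ≤ Bφ * Jφ * R ^ 2 * ‖WK - WK'‖ := by
    calc ‖A' * (B - B')ᵀ * H‖ ≤ ‖A' * (B - B')ᵀ‖ * ‖H‖ := Matrix.frobenius_norm_mul _ _
    _ ≤ ‖A'‖ * ‖(B - B')ᵀ‖ * ‖H‖ := by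
        gcongr; exact Matrix.frobenius_norm_mul _ _
    _ ≤ Bφ * (Jφ * (R * ‖WK - WK'‖)) * R := by
        rw [Matrix.frobenius_norm_transpose]
        exact mul_le_mul (mul_le_mul (hφbound _) hB (norm_nonneg _) hB0) hH
          (norm_nonneg _) (by positivity)
    _ = Bφ * Jφ * R ^ 2 * ‖WK - WK'‖ := by ring
  have hsum : ‖WQ - WQ'‖ + ‖WK - WK'‖
      ≤ Real.sqrt 2 * Real.sqrt (‖WQ - WQ'‖ ^ 2 + ‖WK - WK'‖ ^ 2) := by
    rw [← Real.sqrt_mul (by norm_num)]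
    have h := Real.sqrt_le_sqrt (show (‖WQ - WQ'‖ + ‖WK - WK'‖) ^ 2
        ≤ 2 * (‖WQ - WQ'‖ ^ 2 + ‖WK - WK'‖ ^ 2) by
      nlinarith [sq_nonneg (‖WQ - WQ'‖ - ‖WK - WK'‖)])
    rwa [Real.sqrt_sq (by positivity)] at h
  calc ‖A * Bᵀ * H - A' * B'ᵀ * H‖
      ≤ ‖(A - A') * Bᵀ * H‖ + ‖A' * (B - B')ᵀ * H‖ := by
        rw [key]; exact norm_add_le _ _
    _ ≤ Bφ * Jφ * R ^ 2 * (‖WQ - WQ'‖ + ‖WK - WK'‖) := by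
        rw [mul_add]; exact add_le_add h1 h2
    _ ≤ Bφ * Jφ * R ^ 2 * (Real.sqrt 2 * Real.sqrt (‖WQ - WQ'‖ ^ 2 + ‖WK - WK'‖ ^ 2)) := by
        gcongr
    _ = Real.sqrt 2 * Bφ * Jφ * R ^ 2 * Real.sqrt (‖WQ - WQ'‖ ^ 2 + ‖WK - WK'‖ ^ 2) := by ring
end

section
/- Suppose for each client k the gradient of F_k satisfies the dissimilarity bound Σ_k p_k ‖∇F_k(w)‖² ≤ M² + B²‖∇f(w)‖² where f = Σ_k p_k F_k, and define the regularized local gradient ∇F_k^λ(Φ,θ) = ∇F_k(Φ,θ) + (0, λθ). If ‖∇_θ f(Φ,θ)‖_F ≤ G and ‖θ‖_F ≤ B_θ, then Σ_k p_k ‖∇F_k^λ(Φ,θ)‖² ≤ M² + 2(B² - 1)λ G B_θ + B² ‖∇f_λ(Φ,θ)‖², where ∇f_λ(Φ,θ) = ∇f(Φ,θ) + (0, λθ) and B ≥ 1. -/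
/-!
Adding the same vector `v = λθ` to every local gradient leaves the weighted spread
`∑ p_k ‖g_k‖² - ‖∑ p_k g_k‖²` unchanged, so the regularized gradients satisfy the dissimilarity
bound up to the error `(B² - 1)(‖ḡ‖² - ‖ḡ + v‖²)`, and Cauchy–Schwarz bounds
`‖ḡ‖² - ‖ḡ + v‖² = -2⟪ḡ, v⟫ - ‖v‖²` by `2‖ḡ‖‖v‖ ≤ 2λ G B_θ`.
-/

open Finset
open scoped RealInnerProductSpace

section

variable {E : Type*} [NormedAddCommGroup E] [InnerProductSpace ℝ E]

lemma norm_sq_sub_norm_add_sq_le (a v : E) : ‖a‖ ^ 2 - ‖a + v‖ ^ 2 ≤ 2 * (‖a‖ * ‖v‖) := by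
  have hinner : -⟪a, v⟫ ≤ ‖a‖ * ‖v‖ := neg_le.mp (neg_le_of_abs_le (abs_real_inner_le_norm a v))
  rw [norm_add_sq_real]
  linarith [sq_nonneg ‖v‖]

lemma sum_mul_norm_add_sq_sub_norm_sum_add_sq {ι : Type*} (s : Finset ι) (p : ι → ℝ)
    (hp : ∑ i ∈ s, p i = 1) (g : ι → E) (v : E) :
    ∑ i ∈ s, p i * ‖g i + v‖ ^ 2 - ‖∑ i ∈ s, p i • g i + v‖ ^ 2
      = ∑ i ∈ s, p i * ‖g i‖ ^ 2 - ‖∑ i ∈ s, p i • g i‖ ^ 2 := by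
  have hinner : ⟪∑ i ∈ s, p i • g i, v⟫ = ∑ i ∈ s, p i * ⟪g i, v⟫ := by
    simp only [sum_inner, real_inner_smul_left]
  have hexpand : ∑ i ∈ s, p i * ‖g i + v‖ ^ 2
      = ∑ i ∈ s, p i * ‖g i‖ ^ 2 + 2 * ∑ i ∈ s, p i * ⟪g i, v⟫
        + (∑ i ∈ s, p i) * ‖v‖ ^ 2 := by
    simp only [norm_add_sq_real, mul_add, sum_add_distrib, mul_sum, sum_mul]
    congr 1; congr 1
    exact sum_congr rfl fun i _ => by ring
  rw [hexpand, norm_add_sq_real, hinner, hp]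
  ring

end

theorem stmt14_general {P V : Type*} [NormedAddCommGroup P] [InnerProductSpace ℝ P]
    [NormedAddCommGroup V] [InnerProductSpace ℝ V] {K : ℕ}
    (p : Fin K → ℝ) (hpsum : ∑ k, p k = 1)
    (gFΦ : Fin K → P → V → P) (gFθ : Fin K → P → V → V)
    (M B lam G Bθ : ℝ) (hB : 1 ≤ B) (hlam : 0 < lam)
    (hdissim : ∀ Φ θ,
      (∑ k, p k * (‖gFΦ k Φ θ‖ ^ 2 + ‖gFθ k Φ θ‖ ^ 2))
        ≤ M ^ 2 + B ^ 2 * (‖∑ k, p k • gFΦ k Φ θ‖ ^ 2 + ‖∑ k, p k • gFθ k Φ θ‖ ^ 2))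
    (Φ : P) (θ : V)
    (hGb : ‖∑ k, p k • gFθ k Φ θ‖ ≤ G) (hθb : ‖θ‖ ≤ Bθ) :
    (∑ k, p k * (‖gFΦ k Φ θ‖ ^ 2 + ‖gFθ k Φ θ + lam • θ‖ ^ 2))
      ≤ M ^ 2 + 2 * (B ^ 2 - 1) * lam * G * Bθ
        + B ^ 2 * (‖∑ k, p k • gFΦ k Φ θ‖ ^ 2
            + ‖(∑ k, p k • gFθ k Φ θ) + lam • θ‖ ^ 2) := by
  set gbar := ∑ k, p k • gFθ k Φ θ
  have hshift := sum_mul_norm_add_sq_sub_norm_sum_add_sq univ p hpsum (gFθ · Φ θ) (lam • θ)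
  have hdissim' := hdissim Φ θ
  simp only [mul_add, sum_add_distrib] at hdissim' ⊢
  have hgap : ‖gbar‖ ^ 2 - ‖gbar + lam • θ‖ ^ 2 ≤ 2 * lam * G * Bθ := by
    have hsmul : ‖lam • θ‖ ≤ lam * Bθ := by
      rw [norm_smul, Real.norm_of_nonneg hlam.le]
      exact mul_le_mul_of_nonneg_left hθb hlam.le
    calc ‖gbar‖ ^ 2 - ‖gbar + lam • θ‖ ^ 2 ≤ 2 * (‖gbar‖ * ‖lam • θ‖) :=
          norm_sq_sub_norm_add_sq_le _ _
      _ ≤ 2 * (G * (lam * Bθ)) := by gcongr; exact (norm_nonneg _).trans hGb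
      _ = 2 * lam * G * Bθ := by ring
  have hB2 : 0 ≤ B ^ 2 - 1 := by nlinarith
  linarith [mul_le_mul_of_nonneg_left hgap hB2]

theorem stmt14 {P V : Type*} [NormedAddCommGroup P] [InnerProductSpace ℝ P]
    [NormedAddCommGroup V] [InnerProductSpace ℝ V] {K : ℕ}
    (p : Fin K → ℝ) (hp : ∀ k, 0 ≤ p k) (hpsum : ∑ k, p k = 1)
    (gFΦ : Fin K → P → V → P) (gFθ : Fin K → P → V → V)
    (M B lam G Bθ : ℝ) (hM : 0 ≤ M) (hB : 1 ≤ B) (hlam : 0 < lam)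
    (hG : 0 < G) (hBθ : 0 < Bθ)
    (hdissim : ∀ Φ θ,
      (∑ k, p k * (‖gFΦ k Φ θ‖ ^ 2 + ‖gFθ k Φ θ‖ ^ 2))
        ≤ M ^ 2 + B ^ 2 * (‖∑ k, p k • gFΦ k Φ θ‖ ^ 2 + ‖∑ k, p k • gFθ k Φ θ‖ ^ 2))
    (Φ : P) (θ : V)
    (hGb : ‖∑ k, p k • gFθ k Φ θ‖ ≤ G) (hθb : ‖θ‖ ≤ Bθ) :
    (∑ k, p k * (‖gFΦ k Φ θ‖ ^ 2 + ‖gFθ k Φ θ + lam • θ‖ ^ 2))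
      ≤ M ^ 2 + 2 * (B ^ 2 - 1) * lam * G * Bθ
        + B ^ 2 * (‖∑ k, p k • gFΦ k Φ θ‖ ^ 2
            + ‖(∑ k, p k • gFθ k Φ θ) + lam • θ‖ ^ 2) :=
  stmt14_general p hpsum gFΦ gFθ M B lam G Bθ hB hlam hdissim Φ θ hGb hθb
end

section
/- Let g and each g_k be differentiable with g = Σ_k p_k g_k, and suppose the drift bound ‖b^s‖ ≤ ε√(M² + B²‖∇g(θ^s)‖²) holds with ε = 1/(2B), B ≥ 1. If g is L-smooth and the aggregated update is θ^{s+1} = θ^s - ηE(∇g(θ^s) + b^s) with η ≤ 1/(LE), then g(θ^{s+1}) ≤ g(θ^s) - (3ηE/8)‖∇g(θ^s)‖² + ηE M²/(8B²). -/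
/-!
Smoothness gives the descent lemma `g y ≤ g x + ⟪∇g x, y - x⟫ + L/2 ‖y - x‖²`. For the step
`y = θ - s (∇g θ + b)` with `L s ≤ 1` the quadratic term is at most `s/2 ‖∇g θ + b‖²`, and with
`n = ∇g θ` the polarization identity `‖n + b‖² - 2⟪n, n + b⟫ = ‖b‖² - ‖n‖²` turns the bound into
`g θ - s/2 ‖∇g θ‖² + s/2 ‖b‖²`. The drift hypothesis gives `‖b‖² ≤ M²/(4B²) + ‖∇g θ‖²/4`,
so a quarter of the descent is lost to the drift.
-/

open Set
open scoped RealInnerProductSpace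

section LipschitzGradient

variable {V : Type*} [NormedAddCommGroup V] [InnerProductSpace ℝ V]
  {g : V → ℝ} {gradg : V → V} {L : ℝ}

theorem inner_gradient_add_smul_sub_le
    (hsmooth : ∀ x x', ‖gradg x - gradg x'‖ ≤ L * ‖x - x'‖) (x d : V) {t : ℝ} (ht : 0 ≤ t) :
    ⟪gradg (x + t • d) - gradg x, d⟫ ≤ L * t * ‖d‖ ^ 2 :=
  calc ⟪gradg (x + t • d) - gradg x, d⟫ ≤ ‖gradg (x + t • d) - gradg x‖ * ‖d‖ :=
        real_inner_le_norm _ _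
    _ ≤ L * ‖t • d‖ * ‖d‖ := by
        gcongr
        simpa using hsmooth (x + t • d) x
    _ = L * t * ‖d‖ ^ 2 := by rw [norm_smul, Real.norm_of_nonneg ht]; ring

variable [CompleteSpace V]

theorem HasGradientAt.hasDerivAt_comp_add_smul {g' x d : V} {t : ℝ}
    (h : HasGradientAt g g' (x + t • d)) :
    HasDerivAt (fun t : ℝ => g (x + t • d)) ⟪g', d⟫ t := by
  have hline : HasDerivAt (fun t : ℝ => x + t • d) d t := by
    simpa using ((hasDerivAt_id t).smul_const d).const_add x
  simpa [Function.comp_def] using h.hasFDerivAt.comp_hasDerivAt t hline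

theorem le_add_inner_add_sq_of_lipschitz_gradient (hgrad : ∀ x, HasGradientAt g (gradg x) x)
    (hsmooth : ∀ x x', ‖gradg x - gradg x'‖ ≤ L * ‖x - x'‖) (x y : V) :
    g y ≤ g x + ⟪gradg x, y - x⟫ + L / 2 * ‖y - x‖ ^ 2 := by
  set d := y - x
  let φ : ℝ → ℝ := fun t => g (x + t • d) - t * ⟪gradg x, d⟫ - L / 2 * ‖d‖ ^ 2 * t ^ 2
  have hφ : ∀ t, HasDerivAt φ
      (⟪gradg (x + t • d), d⟫ - ⟪gradg x, d⟫ - L / 2 * ‖d‖ ^ 2 * (2 * t)) t := fun t =>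
    (((hgrad _).hasDerivAt_comp_add_smul.sub ((hasDerivAt_id t).mul_const _)).sub
      ((hasDerivAt_pow 2 t).const_mul _)).congr_deriv (by simp)
  have hanti : AntitoneOn φ (Icc 0 1) := by
    refine antitoneOn_of_hasDerivWithinAt_nonpos (convex_Icc 0 1)
      (fun t _ => (hφ t).continuousAt.continuousWithinAt) (fun t _ => (hφ t).hasDerivWithinAt)
      fun t ht => ?_
    rw [interior_Icc] at ht
    have := inner_gradient_add_smul_sub_le hsmooth x d ht.1.le
    rw [inner_sub_left] at this
    linarith
  have hφ_le := hanti (left_mem_Icc.2 zero_le_one) (right_mem_Icc.2 zero_le_one) zero_le_one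
  simp only [φ, d, one_smul, add_sub_cancel, zero_smul, add_zero] at hφ_le
  linarith

theorem apply_biased_gradient_step_le (hgrad : ∀ x, HasGradientAt g (gradg x) x)
    (hsmooth : ∀ x x', ‖gradg x - gradg x'‖ ≤ L * ‖x - x'‖) {s : ℝ} (hs : 0 ≤ s)
    (hLs : L * s ≤ 1) (θ b : V) :
    g (θ - s • (gradg θ + b)) ≤ g θ - s / 2 * ‖gradg θ‖ ^ 2 + s / 2 * ‖b‖ ^ 2 := by
  have hdescent := le_add_inner_add_sq_of_lipschitz_gradient hgrad hsmooth θ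
    (θ - s • (gradg θ + b))
  rw [sub_sub_cancel_left, inner_neg_right, inner_smul_right, norm_neg, norm_smul,
    Real.norm_of_nonneg hs] at hdescent
  have hquad : L / 2 * (s * ‖gradg θ + b‖) ^ 2 ≤ s / 2 * ‖gradg θ + b‖ ^ 2 :=
    calc L / 2 * (s * ‖gradg θ + b‖) ^ 2 = L * s * s / 2 * ‖gradg θ + b‖ ^ 2 := by ring
      _ ≤ s / 2 * ‖gradg θ + b‖ ^ 2 := by gcongr; exact mul_le_of_le_one_left hs hLs
  have hpolar := norm_sub_sq_real (gradg θ + b) (gradg θ)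
  rw [add_sub_cancel_left, real_inner_comm] at hpolar
  linear_combination hdescent + hquad - s / 2 * hpolar

end LipschitzGradient

theorem sq_le_of_le_inv_two_mul_sqrt {r M B a : ℝ} (hr : 0 ≤ r)
    (h : r ≤ 1 / (2 * B) * √(M ^ 2 + B ^ 2 * a ^ 2)) :
    r ^ 2 ≤ M ^ 2 / (4 * B ^ 2) + a ^ 2 / 4 :=
  calc r ^ 2 ≤ (1 / (2 * B) * √(M ^ 2 + B ^ 2 * a ^ 2)) ^ 2 := by gcongr
    _ = M ^ 2 / (4 * B ^ 2) + B ^ 2 / B ^ 2 * (a ^ 2 / 4) := by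
        rw [mul_pow, Real.sq_sqrt (by positivity)]; ring
    _ ≤ M ^ 2 / (4 * B ^ 2) + a ^ 2 / 4 := by
        gcongr
        exact mul_le_of_le_one_left (by positivity) (div_self_le_one _)

theorem stmt18_general {V : Type*} [NormedAddCommGroup V] [InnerProductSpace ℝ V]
    [CompleteSpace V]
    (g : V → ℝ) (gradg : V → V) (hgrad : ∀ x, HasGradientAt g (gradg x) x)
    (L η M B : ℝ) (E : ℕ) (hL : 0 < L) (hη : 0 < η)
    (hsmooth : ∀ x x', ‖gradg x - gradg x'‖ ≤ L * ‖x - x'‖)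
    (hstep : η ≤ 1 / (L * E))
    (θ b : V)
    (hdrift : ‖b‖ ≤ 1 / (2 * B) * Real.sqrt (M ^ 2 + B ^ 2 * ‖gradg θ‖ ^ 2)) :
    g (θ - (η * E) • (gradg θ + b))
      ≤ g θ - 3 * η * E / 8 * ‖gradg θ‖ ^ 2 + η * E * M ^ 2 / (8 * B ^ 2) := by
  have hs : 0 ≤ η * E := by positivity
  have hLs : L * (η * E) ≤ 1 :=
    calc L * (η * E) = L * E * η := by ring
      _ ≤ L * E * (1 / (L * E)) := by gcongr
      _ ≤ 1 := by rw [one_div]; exact mul_inv_le_one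
  have hstepped := apply_biased_gradient_step_le hgrad hsmooth hs hLs θ b
  have hdrift_sq := sq_le_of_le_inv_two_mul_sqrt (norm_nonneg b) hdrift
  linear_combination hstepped + η * E / 2 * hdrift_sq

theorem stmt18 {V : Type*} [NormedAddCommGroup V] [InnerProductSpace ℝ V]
    [CompleteSpace V]
    (g : V → ℝ) (gradg : V → V) (hgrad : ∀ x, HasGradientAt g (gradg x) x)
    (L η M B : ℝ) (E : ℕ) (hL : 0 < L) (hη : 0 < η) (hE : 1 ≤ E)
    (hM : 0 ≤ M) (hB : 1 ≤ B)
    (hsmooth : ∀ x x', ‖gradg x - gradg x'‖ ≤ L * ‖x - x'‖)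
    (hstep : η ≤ 1 / (L * E))
    (θ b : V)
    (hdrift : ‖b‖ ≤ 1 / (2 * B) * Real.sqrt (M ^ 2 + B ^ 2 * ‖gradg θ‖ ^ 2)) :
    g (θ - (η * E) • (gradg θ + b))
      ≤ g θ - 3 * η * E / 8 * ‖gradg θ‖ ^ 2 + η * E * M ^ 2 / (8 * B ^ 2) :=
  stmt18_general g gradg hgrad L η M B E hL hη hsmooth hstep θ b hdrift
end
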